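/- arXiv:2305.12952 — 5 statements merged into one kernel-verified Lean document; each statement's English description precedes it below -/
import Mathlib

section
/- Let Q be a positive integer, h ∈ ℂ with h ≠ 0, and f, g ∈ ℂ^Q such that the vector v ∈ ℂ^Q defined by v_q = conj(f_q)·g_q is nonzero. Define γ* = √Q · (h/|h|) · v/‖v‖ ∈ ℂ^Q. Then ‖γ*‖² = Q and |h|² + 2·Re( conj(h) · ∑_{q=1}^Q conj(v_q) γ*_q ) + |∑_{q=1}^Q conj(v_q) γ*_q|² = ( |h| + √Q · ‖v‖ )². -/
/-!
The cost is `|h + ⟪v, γ⟫|²`, so by the triangle and Cauchy–Schwarz inequalities it is at most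
`(|h| + ‖v‖ ‖γ‖)²`. The choice `γ* = √Q (h/|h|) v/‖v‖` makes both inequalities equalities:
`γ*` is parallel to `v`, so `⟪v, γ*⟫ = √Q ‖v‖ (h/|h|)`, which has the same phase as `h`.
-/

open ComplexConjugate

namespace Complex

theorem norm_sq_add_two_re_conj_mul_add_norm_sq (x z : ℂ) :
    ‖x‖ ^ 2 + 2 * (conj x * z).re + ‖z‖ ^ 2 = ‖x + z‖ ^ 2 := by
  rw [norm_add_sq (𝕜 := ℂ), RCLike.inner_apply', RCLike.re_to_complex]

theorem norm_div_norm_self {x : ℂ} (hx : x ≠ 0) : ‖x / ‖x‖‖ = 1 := by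
  rw [norm_div, norm_real, norm_norm, div_self (norm_ne_zero_iff.mpr hx)]

theorem norm_add_ofReal_mul_div_norm_self {x : ℂ} (hx : x ≠ 0) {r : ℝ} (hr : 0 ≤ r) :
    ‖x + r * (x / ‖x‖)‖ = ‖x‖ + r := by
  have hx' : (‖x‖ : ℂ) ≠ 0 := ofReal_ne_zero.mpr (norm_ne_zero_iff.mpr hx)
  have : x + r * (x / ‖x‖) = ((‖x‖ + r : ℝ) : ℂ) * (x / ‖x‖) := by
    push_cast
    field_simp
  rw [this, norm_mul, norm_div_norm_self hx, mul_one, norm_real,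
    Real.norm_of_nonneg (by positivity)]

end Complex

section InnerProductSpace

open Complex

variable {E : Type*} [NormedAddCommGroup E] [InnerProductSpace ℂ E]

theorem norm_smul_div_norm_self (c : ℂ) {v : E} (hv : v ≠ 0) : ‖(c / ‖v‖) • v‖ = ‖c‖ := by
  rw [div_eq_mul_inv, mul_smul, norm_smul, norm_smul, norm_inv, norm_real, norm_norm,
    inv_mul_cancel₀ (norm_ne_zero_iff.mpr hv), mul_one]

theorem inner_smul_div_norm_self_right (c : ℂ) (v : E) :
    inner ℂ v ((c / ‖v‖) • v) = c * ‖v‖ := by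
  rw [inner_smul_right, inner_self_eq_norm_sq_to_K, ← RCLike.ofReal_eq_complex_ofReal]
  rcases eq_or_ne (‖v‖ : ℂ) 0 with hv | hv
  · simp [hv]
  · field_simp

end InnerProductSpace

theorem stmt_1_general (Q : ℕ) (h : ℂ) (hh : h ≠ 0)
    (v γ : EuclideanSpace ℂ (Fin Q))
    (hv0 : v ≠ 0)
    (hγ : ∀ q, γ q = (Real.sqrt Q : ℂ) * (h / (‖h‖ : ℂ)) * (v q / (‖v‖ : ℂ))) :
    ‖γ‖ ^ 2 = (Q : ℝ) ∧
    ‖h‖ ^ 2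
      + 2 * (((starRingEnd ℂ) h) * ∑ q, (starRingEnd ℂ) (v q) * γ q).re
      + ‖∑ q, (starRingEnd ℂ) (v q) * γ q‖ ^ 2
    = (‖h‖ + Real.sqrt Q * ‖v‖) ^ 2 := by
  set c : ℂ := Real.sqrt Q * (h / ‖h‖)
  have hγc : γ = (c / ‖v‖) • v := by
    ext q
    simp only [PiLp.smul_apply, smul_eq_mul, hγ q, c]
    ring
  have hnorm_c : ‖c‖ = Real.sqrt Q := by
    rw [norm_mul, Complex.norm_div_norm_self hh, mul_one, Complex.norm_real,
      Real.norm_of_nonneg (Real.sqrt_nonneg _)]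
  have hsum : ∑ q, conj (v q) * γ q = (Real.sqrt Q * ‖v‖ : ℝ) * (h / ‖h‖) := by
    calc ∑ q, conj (v q) * γ q = inner ℂ v γ := by
          simp only [PiLp.inner_apply, RCLike.inner_apply']
      _ = c * ‖v‖ := hγc ▸ inner_smul_div_norm_self_right c v
      _ = (Real.sqrt Q * ‖v‖ : ℝ) * (h / ‖h‖) := by push_cast; ring
  constructor
  · rw [hγc, norm_smul_div_norm_self c hv0, hnorm_c, Real.sq_sqrt (Nat.cast_nonneg Q)]
  · rw [hsum, Complex.norm_sq_add_two_re_conj_mul_add_norm_sq,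
      Complex.norm_add_ofReal_mul_div_norm_self hh (by positivity)]

/-- Achievability part of Lemma 1: the reflection vector
`γ* = √Q (h/|h|) v/‖v‖` satisfies the power constraint `‖γ*‖² = Q` and attains
the upper bound `(|h| + √Q ‖v‖)²` of the cost
`|h|² + 2 Re{conj(h) ∑ conj(v_q) γ_q} + |∑ conj(v_q) γ_q|²`,
where `v_q = conj(f_q) g_q`. -/
theorem stmt_1 (Q : ℕ) (hQ : 0 < Q) (h : ℂ) (hh : h ≠ 0)
    (f g v γ : EuclideanSpace ℂ (Fin Q))
    (hv : ∀ q, v q = (starRingEnd ℂ) (f q) * g q) (hv0 : v ≠ 0)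
    (hγ : ∀ q, γ q = (Real.sqrt Q : ℂ) * (h / (‖h‖ : ℂ)) * (v q / (‖v‖ : ℂ))) :
    ‖γ‖ ^ 2 = (Q : ℝ) ∧
    ‖h‖ ^ 2
      + 2 * (((starRingEnd ℂ) h) * ∑ q, (starRingEnd ℂ) (v q) * γ q).re
      + ‖∑ q, (starRingEnd ℂ) (v q) * γ q‖ ^ 2
    = (‖h‖ + Real.sqrt Q * ‖v‖) ^ 2 :=
  stmt_1_general Q h hh v γ hv0 hγ
end

section
/- Let K be a positive integer, let x_1, …, x_K be nonnegative real numbers, and let P_TX > 0. Then the supremum, over all nonnegative reals p_1, …, p_K with ∑_{k=1}^K p_k ≤ P_TX, of ∑_{k=1}^K log( 1 + p_k x_k / ( x_k · (∑_{u ≠ k} p_u) + 1 ) ) equals log( 1 + P_TX · max_{1 ≤ k ≤ K} x_k ), and the supremum is attained by the allocation that assigns all power P_TX to a user k achieving the maximum of x_k and zero power to all other users. -/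
private lemma aux_term (p x c B Q : ℝ) (hp : 0 ≤ p) (hx : 0 ≤ x) (hxc : x ≤ c)
    (hB : 0 ≤ B) (hBQ : B ≤ Q) :
    Real.log (1 + p * x / (x * Q + 1)) ≤
      Real.log (c * (p + B) + 1) - Real.log (c * B + 1) := by
  have hc : 0 ≤ c := hx.trans hxc
  have hQ : 0 ≤ Q := hB.trans hBQ
  have hd1 : 0 < x * Q + 1 := by positivity
  have hd2 : 0 < c * B + 1 := by positivity
  have hnum : 0 < c * (p + B) + 1 := by positivity
  have e : (c * (p + B) + 1) / (c * B + 1) = 1 + p * c / (c * B + 1) := by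
    field_simp; ring
  have key : p * x / (x * Q + 1) ≤ p * c / (c * B + 1) := by
    rw [div_le_div_iff₀ hd1 hd2]
    nlinarith [mul_le_mul_of_nonneg_left hxc hp,
      mul_le_mul_of_nonneg_left hBQ (mul_nonneg (mul_nonneg hp hx) hc)]
  have h1 : 0 < 1 + p * x / (x * Q + 1) := by positivity
  calc Real.log (1 + p * x / (x * Q + 1))
      ≤ Real.log (1 + p * c / (c * B + 1)) := Real.log_le_log h1 (by linarith)
    _ = Real.log ((c * (p + B) + 1) / (c * B + 1)) := by rw [e]
    _ = Real.log (c * (p + B) + 1) - Real.log (c * B + 1) :=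
        Real.log_div hnum.ne' hd2.ne'

private lemma attain_eq (K : ℕ) (x : Fin K → ℝ) (PTX : ℝ) (k₀ : Fin K) :
    (∑ k, Real.log (1 + (if k = k₀ then PTX else 0) * x k /
        (x k * (∑ u ∈ Finset.univ.erase k, (if u = k₀ then PTX else 0)) + 1)))
      = Real.log (1 + PTX * x k₀) := by
  rw [Finset.sum_eq_single k₀]
  · have h0 : (∑ u ∈ Finset.univ.erase k₀, (if u = k₀ then PTX else 0)) = 0 := by
      apply Finset.sum_eq_zero
      intro u hu
      simp [Finset.ne_of_mem_erase hu]
    simp [h0]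
  · intro k _ hk
    simp [hk]
  · intro h
    simp at h

/-- Opportunistic time-sharing achieves the sum-rate capacity: the supremum of
`∑ₖ log(1 + pₖ xₖ / (xₖ ∑_{u≠k} pᵤ + 1))` over nonnegative power allocations
with `∑ₖ pₖ ≤ P_TX` equals `log(1 + P_TX · maxₖ xₖ)`, and it is attained by
assigning all power `P_TX` to a user `k₀` with the largest `xₖ`. -/
theorem stmt_3 (K : ℕ) (hK : 0 < K) (x : Fin K → ℝ) (hx : ∀ k, 0 ≤ x k)
    (PTX : ℝ) (hP : 0 < PTX) (k₀ : Fin K) (hk₀ : ∀ k, x k ≤ x k₀) :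
    IsGreatest {r : ℝ | ∃ p : Fin K → ℝ, (∀ k, 0 ≤ p k) ∧ (∑ k, p k) ≤ PTX ∧
        r = ∑ k, Real.log (1 + p k * x k /
              (x k * (∑ u ∈ Finset.univ.erase k, p u) + 1))}
      (Real.log (1 + PTX * x k₀)) ∧
    (∑ k, Real.log (1 + (if k = k₀ then PTX else 0) * x k /
        (x k * (∑ u ∈ Finset.univ.erase k, (if u = k₀ then PTX else 0)) + 1)))
      = Real.log (1 + PTX * x k₀) := by
  have hc : 0 ≤ x k₀ := hx k₀
  refine ⟨⟨⟨fun k => if k = k₀ then PTX else 0, fun k => by positivity, ?_, (attain_eq K x PTX k₀).symm⟩, ?_⟩, attain_eq K x PTX k₀⟩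
  · simp
  · rintro r ⟨p, hp, hsum, rfl⟩
    set c := x k₀ with hcdef
    -- tail sums
    set A : ℕ → ℝ := fun n => ∑ u ∈ Finset.univ.filter (fun u : Fin K => n ≤ u.val), p u with hAdef
    have hA0 : ∀ n, 0 ≤ A n := fun n => Finset.sum_nonneg fun u _ => hp u
    have hAK : A K = 0 := by
      apply Finset.sum_eq_zero
      intro u hu
      simp at hu
      omega
    have hAtot : A 0 = ∑ k, p k := by
      simp [hAdef]
    have hrec : ∀ k : Fin K, A k.val = p k + A (k.val + 1) := by
      intro k
      have hset : Finset.univ.filter (fun u : Fin K => k.val ≤ u.val) =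
          insert k (Finset.univ.filter (fun u : Fin K => k.val + 1 ≤ u.val)) := by
        ext u
        simp only [Finset.mem_filter, Finset.mem_univ, true_and, Finset.mem_insert]
        constructor
        · intro h
          rcases eq_or_lt_of_le h with h | h
          · left; exact (Fin.ext h).symm
          · right; omega
        · rintro (rfl | h) <;> omega
      have hnot : k ∉ Finset.univ.filter (fun u : Fin K => k.val + 1 ≤ u.val) := by
        simp
      rw [hAdef]
      simp only
      rw [hset, Finset.sum_insert hnot]
    have hAle : ∀ k : Fin K, A (k.val + 1) ≤ ∑ u ∈ Finset.univ.erase k, p u := by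
      intro k
      apply Finset.sum_le_sum_of_subset_of_nonneg
      · intro u hu
        simp only [Finset.mem_filter, Finset.mem_univ, true_and] at hu
        simp only [Finset.mem_erase, Finset.mem_univ, and_true]
        intro h
        subst h
        omega
      · intro u _ _
        exact hp u
    set F : ℕ → ℝ := fun n => Real.log (c * A n + 1) with hFdef
    have hterm : ∀ k : Fin K, Real.log (1 + p k * x k /
        (x k * (∑ u ∈ Finset.univ.erase k, p u) + 1)) ≤ F k.val - F (k.val + 1) := by
      intro k
      have := aux_term (p k) (x k) c (A (k.val + 1)) (∑ u ∈ Finset.univ.erase k, p u)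
        (hp k) (hx k) (hk₀ k) (hA0 _) (hAle k)
      calc Real.log (1 + p k * x k / (x k * (∑ u ∈ Finset.univ.erase k, p u) + 1))
          ≤ Real.log (c * (p k + A (k.val + 1)) + 1) - Real.log (c * A (k.val + 1) + 1) := this
        _ = F k.val - F (k.val + 1) := by rw [hFdef]; simp only; rw [hrec k]
    calc (∑ k, Real.log (1 + p k * x k /
            (x k * (∑ u ∈ Finset.univ.erase k, p u) + 1)))
        ≤ ∑ k : Fin K, (F k.val - F (k.val + 1)) := Finset.sum_le_sum fun k _ => hterm k
      _ = ∑ i ∈ Finset.range K, (F i - F (i + 1)) :=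
          Fin.sum_univ_eq_sum_range (fun i => F i - F (i + 1)) K
      _ = F 0 - F K := Finset.sum_range_sub' F K
      _ ≤ Real.log (1 + PTX * c) := by
          have hFK : F K = 0 := by simp [hFdef, hAK]
        
          rw [hFK, sub_zero, hFdef]
          simp only
          rw [hAtot]
          apply Real.log_le_log
          · have := hA0 0
            rw [hAtot] at this
            positivity
          · nlinarith [mul_le_mul_of_nonneg_left hsum hc]
end

section
/- Let σ_f, σ_g, σ_h > 0, P_TX > 0, χ > 0, and let C be the Euler–Mascheroni constant. For real K > 1 set Q(K) = χ K, b_K = ( σ_f σ_g Q(K) + σ_h √(ln K) )² and a_K = σ_h² + σ_f σ_g σ_h Q(K)/√(ln K). Then P_TX ( b_K + C a_K ) / Q(K)² tends to P_TX σ_f² σ_g² as K → +∞. -/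
open Filter Real

private lemma aux_sqrtlog_div (χ : ℝ) (hχ : 0 < χ) :
    Tendsto (fun K : ℝ => Real.sqrt (Real.log K) / (χ * K)) atTop (nhds 0) := by
  have hlog : Tendsto (fun K : ℝ => Real.log K / K) atTop (nhds 0) :=
    Real.isLittleO_log_id_atTop.tendsto_div_nhds_zero
  have hlog' : Tendsto (fun K : ℝ => χ⁻¹ * (Real.log K / K)) atTop (nhds 0) := by
    simpa using hlog.const_mul χ⁻¹
  apply tendsto_of_tendsto_of_tendsto_of_le_of_le' tendsto_const_nhds hlog'
  · filter_upwards [eventually_ge_atTop (Real.exp 1)] with K hK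
    have hK0 : 0 < K := lt_of_lt_of_le (Real.exp_pos 1) hK
    positivity
  · filter_upwards [eventually_ge_atTop (Real.exp 1)] with K hK
    have hK0 : 0 < K := lt_of_lt_of_le (Real.exp_pos 1) hK
    have h1 : (1:ℝ) ≤ Real.log K := by
      rw [← Real.log_exp 1]; exact Real.log_le_log (Real.exp_pos 1) hK
    have hs1 : (1:ℝ) ≤ Real.sqrt (Real.log K) := Real.one_le_sqrt.mpr h1
    have hs : Real.sqrt (Real.log K) ≤ Real.log K := by
      nlinarith [Real.sq_sqrt (le_trans zero_le_one h1)]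
    rw [div_le_iff₀ (by positivity)]
    have heq : χ⁻¹ * (Real.log K / K) * (χ * K) = Real.log K := by field_simp
    rw [heq]; exact hs

private lemma aux_log_div_sq (χ : ℝ) (hχ : 0 < χ) :
    Tendsto (fun K : ℝ => Real.log K / (χ * K) ^ 2) atTop (nhds 0) := by
  have hlog : Tendsto (fun K : ℝ => Real.log K / K) atTop (nhds 0) :=
    Real.isLittleO_log_id_atTop.tendsto_div_nhds_zero
  have hlog' : Tendsto (fun K : ℝ => (χ ^ 2)⁻¹ * (Real.log K / K)) atTop (nhds 0) := by
    simpa using hlog.const_mul ((χ ^ 2)⁻¹)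
  apply tendsto_of_tendsto_of_tendsto_of_le_of_le' tendsto_const_nhds hlog'
  · filter_upwards [eventually_ge_atTop (Real.exp 1)] with K hK
    have hK0 : 0 < K := lt_of_lt_of_le (Real.exp_pos 1) hK
    have h1 : (1:ℝ) ≤ Real.log K := by
      rw [← Real.log_exp 1]; exact Real.log_le_log (Real.exp_pos 1) hK
    positivity
  · filter_upwards [eventually_ge_atTop (max (Real.exp 1) 1)] with K hK
    have hK0 : 0 < K := lt_of_lt_of_le (Real.exp_pos 1) (le_trans (le_max_left _ _) hK)
    have hK1 : (1:ℝ) ≤ K := le_trans (le_max_right _ _) hK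
    have h1 : (1:ℝ) ≤ Real.log K := by
      rw [← Real.log_exp 1]
      exact Real.log_le_log (Real.exp_pos 1) (le_trans (le_max_left _ _) hK)
    rw [div_le_iff₀ (by positivity)]
    have : (χ ^ 2)⁻¹ * (Real.log K / K) * (χ * K) ^ 2 = Real.log K * K := by
      field_simp
    rw [this]
    nlinarith

/-- Scaling law when the number of meta-atoms grows linearly with the number of
users, `Q(K) = χ K`: the average receive SNR `P_TX(b_K + C a_K)` scales like
`Q²`, i.e. `P_TX(b_K + C a_K)/Q(K)² → P_TX σ_f² σ_g²` as `K → ∞`. -/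
theorem stmt_12 (σf σg σh PTX χ : ℝ) (hσf : 0 < σf) (hσg : 0 < σg)
    (hσh : 0 < σh) (hP : 0 < PTX) (hχ : 0 < χ) :
    Filter.Tendsto
      (fun K : ℝ =>
        PTX * (((σf * σg * (χ * K) + σh * Real.sqrt (Real.log K)) ^ 2)
          + Real.eulerMascheroniConstant *
            (σh ^ 2 + σf * σg * σh * (χ * K) / Real.sqrt (Real.log K)))
          / (χ * K) ^ 2)
      Filter.atTop (nhds (PTX * σf ^ 2 * σg ^ 2)) := by
  set C := Real.eulerMascheroniConstant with hC
  -- auxiliary limits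
  have h1 : Tendsto (fun K : ℝ => Real.sqrt (Real.log K) / (χ * K)) atTop (nhds 0) :=
    aux_sqrtlog_div χ hχ
  have h2 : Tendsto (fun K : ℝ => Real.log K / (χ * K) ^ 2) atTop (nhds 0) :=
    aux_log_div_sq χ hχ
  have hχK : Tendsto (fun K : ℝ => χ * K) atTop atTop := tendsto_id.const_mul_atTop hχ
  have hden : Tendsto (fun K : ℝ => (χ * K) ^ 2) atTop atTop := by
    simpa [sq] using hχK.atTop_mul_atTop₀ hχK
  have h3 : Tendsto (fun K : ℝ => 1 / (χ * K) ^ 2) atTop (nhds 0) := by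
    simpa only [one_div, Pi.inv_def] using hden.inv_tendsto_atTop
  have hsqrt : Tendsto Real.sqrt atTop atTop := by
    refine tendsto_atTop_atTop.mpr fun b => ⟨max 0 b ^ 2, fun x hx => ?_⟩
    calc b ≤ max 0 b := le_max_right _ _
      _ = Real.sqrt (max 0 b ^ 2) := (Real.sqrt_sq (le_max_left _ _)).symm
      _ ≤ Real.sqrt x := Real.sqrt_le_sqrt hx
  have hden2 : Tendsto (fun K : ℝ => χ * K * Real.sqrt (Real.log K)) atTop atTop := by
    exact hχK.atTop_mul_atTop₀ (hsqrt.comp Real.tendsto_log_atTop)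
  have h4 : Tendsto (fun K : ℝ => 1 / (χ * K * Real.sqrt (Real.log K))) atTop (nhds 0) := by
    simpa only [one_div, Pi.inv_def] using hden2.inv_tendsto_atTop
  -- the decomposed limit
  have hg : Tendsto (fun K : ℝ =>
      PTX * σf ^ 2 * σg ^ 2
      + (PTX * (2 * σf * σg * σh)) * (Real.sqrt (Real.log K) / (χ * K))
      + (PTX * σh ^ 2) * (Real.log K / (χ * K) ^ 2)
      + (PTX * C * σh ^ 2) * (1 / (χ * K) ^ 2)
      + (PTX * C * σf * σg * σh) * (1 / (χ * K * Real.sqrt (Real.log K))))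
      atTop (nhds (PTX * σf ^ 2 * σg ^ 2)) := by
    have := ((((tendsto_const_nhds (x := PTX * σf ^ 2 * σg ^ 2) (f := atTop)).add
      (h1.const_mul (PTX * (2 * σf * σg * σh)))).add
      (h2.const_mul (PTX * σh ^ 2))).add
      (h3.const_mul (PTX * C * σh ^ 2))).add
      (h4.const_mul (PTX * C * σf * σg * σh))
    simpa using this
  refine hg.congr' ?_
  filter_upwards [eventually_ge_atTop (Real.exp 1)] with K hK
  have hK0 : 0 < K := lt_of_lt_of_le (Real.exp_pos 1) hK
  have hlog1 : (1:ℝ) ≤ Real.log K := by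
    rw [← Real.log_exp 1]; exact Real.log_le_log (Real.exp_pos 1) hK
  have hlog0 : 0 ≤ Real.log K := le_trans zero_le_one hlog1
  have hs0 : 0 < Real.sqrt (Real.log K) := Real.sqrt_pos.mpr (lt_of_lt_of_le one_pos hlog1)
  set s := Real.sqrt (Real.log K) with hsdef
  have hs2 : s ^ 2 = Real.log K := Real.sq_sqrt hlog0
  rw [← hs2]
  have hχK0 : χ * K ≠ 0 := by positivity
  field_simp
  ring
end

section
/- Let σ_h, σ_f, σ_g > 0 and let Q be a positive integer. Let A and B be independent nonnegative real random variables on a probability space such that E[A^n] = σ_h^n Γ(1 + n/2) and E[B^n] = (σ_f σ_g √Q)^n Γ(Q + n/2)/Γ(Q) for n = 1, 2, 3, 4. Then E[(A + B)⁴] = 2 σ_h⁴ + 3 σ_f σ_g σ_h³ √(Q π) Γ(Q+1/2)/Γ(Q) + 6 σ_f² σ_g² σ_h² Q² + 2 σ_f³ σ_g³ σ_h Q √(Q π) Γ(Q+3/2)/Γ(Q) + σ_f⁴ σ_g⁴ Q³ (Q + 1). -/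
open MeasureTheory

/-- Second moment of the overall channel power (paper's eq. (rmsX_k)): with
`A = |h_k|` Rayleigh (moments `E[Aⁿ] = σ_hⁿ Γ(1+n/2)`) and
`B = σ_g √Q ‖f_k‖` Nakagami (moments `E[Bⁿ] = (σ_fσ_g√Q)ⁿ Γ(Q+n/2)/Γ(Q)`),
independent, one has
`E[(A+B)⁴] = 2σ_h⁴ + 3σ_fσ_gσ_h³√(Qπ)Γ(Q+1/2)/Γ(Q) + 6σ_f²σ_g²σ_h²Q²
  + 2σ_f³σ_g³σ_h Q√(Qπ)Γ(Q+3/2)/Γ(Q) + σ_f⁴σ_g⁴Q³(Q+1)`. -/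
theorem stmt_16 {Ω : Type*} [MeasurableSpace Ω] (μ : Measure Ω)
    [IsProbabilityMeasure μ] (σh σf σg : ℝ) (hσh : 0 < σh) (hσf : 0 < σf)
    (hσg : 0 < σg) (Q : ℕ) (hQ : 0 < Q)
    (A B : Ω → ℝ) (hA : Measurable A) (hB : Measurable B)
    (hA0 : ∀ ω, 0 ≤ A ω) (hB0 : ∀ ω, 0 ≤ B ω)
    (hindep : ProbabilityTheory.IndepFun A B μ)
    (hAint : ∀ n : ℕ, 1 ≤ n → n ≤ 4 → Integrable (fun ω => A ω ^ n) μ)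
    (hBint : ∀ n : ℕ, 1 ≤ n → n ≤ 4 → Integrable (fun ω => B ω ^ n) μ)
    (hAmom : ∀ n : ℕ, 1 ≤ n → n ≤ 4 →
      ∫ ω, A ω ^ n ∂μ = σh ^ n * Real.Gamma (1 + (n : ℝ) / 2))
    (hBmom : ∀ n : ℕ, 1 ≤ n → n ≤ 4 →
      ∫ ω, B ω ^ n ∂μ = (σf * σg * Real.sqrt (Q : ℝ)) ^ n *
        (Real.Gamma ((Q : ℝ) + (n : ℝ) / 2) / Real.Gamma (Q : ℝ))) :
    ∫ ω, (A ω + B ω) ^ 4 ∂μ =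
      2 * σh ^ 4
        + 3 * σf * σg * σh ^ 3 * Real.sqrt ((Q : ℝ) * Real.pi) *
            (Real.Gamma ((Q : ℝ) + 1 / 2) / Real.Gamma (Q : ℝ))
        + 6 * σf ^ 2 * σg ^ 2 * σh ^ 2 * (Q : ℝ) ^ 2
        + 2 * σf ^ 3 * σg ^ 3 * σh * (Q : ℝ) * Real.sqrt ((Q : ℝ) * Real.pi) *
            (Real.Gamma ((Q : ℝ) + 3 / 2) / Real.Gamma (Q : ℝ))
        + σf ^ 4 * σg ^ 4 * (Q : ℝ) ^ 3 * ((Q : ℝ) + 1) := by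
  -- independence of powers
  have hpow : ∀ i j : ℕ,
      ProbabilityTheory.IndepFun (fun ω => A ω ^ i) (fun ω => B ω ^ j) μ := by
    intro i j
    exact hindep.comp (measurable_id.pow_const i) (measurable_id.pow_const j)
  have hint : ∀ i j : ℕ, 1 ≤ i → i ≤ 4 → 1 ≤ j → j ≤ 4 →
      Integrable (fun ω => A ω ^ i * B ω ^ j) μ := fun i j hi1 hi4 hj1 hj4 =>
    (hpow i j).integrable_mul (hAint i hi1 hi4) (hBint j hj1 hj4)
  have hmul : ∀ i j : ℕ, 1 ≤ i → i ≤ 4 → 1 ≤ j → j ≤ 4 →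
      ∫ ω, A ω ^ i * B ω ^ j ∂μ =
        (∫ ω, A ω ^ i ∂μ) * ∫ ω, B ω ^ j ∂μ := fun i j hi1 hi4 hj1 hj4 =>
    (hpow i j).integral_fun_mul_eq_mul_integral (hAint i hi1 hi4).1 (hBint j hj1 hj4).1
  have hexp : (fun ω => (A ω + B ω) ^ 4) =
      (fun ω => A ω ^ 4 + (4 * (A ω ^ 3 * B ω ^ 1) + (6 * (A ω ^ 2 * B ω ^ 2)
        + (4 * (A ω ^ 1 * B ω ^ 3) + B ω ^ 4)))) := by
    funext ω; ring
  rw [hexp]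
  have i31 := hint 3 1 (by norm_num) (by norm_num) (by norm_num) (by norm_num)
  have i22 := hint 2 2 (by norm_num) (by norm_num) (by norm_num) (by norm_num)
  have i13 := hint 1 3 (by norm_num) (by norm_num) (by norm_num) (by norm_num)
  have iB4 := hBint 4 (by norm_num) (by norm_num)
  have iA4 := hAint 4 (by norm_num) (by norm_num)
  have j1 : Integrable (fun ω => 4 * (A ω ^ 1 * B ω ^ 3) + B ω ^ 4) μ :=
    (i13.const_mul 4).add iB4
  have j2 : Integrable (fun ω => 6 * (A ω ^ 2 * B ω ^ 2)
      + (4 * (A ω ^ 1 * B ω ^ 3) + B ω ^ 4)) μ := (i22.const_mul 6).add j1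
  have j3 : Integrable (fun ω => 4 * (A ω ^ 3 * B ω ^ 1) + (6 * (A ω ^ 2 * B ω ^ 2)
      + (4 * (A ω ^ 1 * B ω ^ 3) + B ω ^ 4))) μ := (i31.const_mul 4).add j2
  rw [integral_add iA4 j3, integral_add (i31.const_mul 4) j2,
    integral_add (i22.const_mul 6) j1, integral_add (i13.const_mul 4) iB4]
  simp only [MeasureTheory.integral_const_mul]
  rw [hmul 3 1 (by norm_num) (by norm_num) (by norm_num) (by norm_num),
    hmul 2 2 (by norm_num) (by norm_num) (by norm_num) (by norm_num),
    hmul 1 3 (by norm_num) (by norm_num) (by norm_num) (by norm_num),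
    hAmom 1 (by norm_num) (by norm_num), hAmom 2 (by norm_num) (by norm_num),
    hAmom 3 (by norm_num) (by norm_num), hAmom 4 (by norm_num) (by norm_num),
    hBmom 1 (by norm_num) (by norm_num), hBmom 2 (by norm_num) (by norm_num),
    hBmom 3 (by norm_num) (by norm_num), hBmom 4 (by norm_num) (by norm_num)]
  have hQR : (0:ℝ) < (Q:ℝ) := by exact_mod_cast hQ
  have hΓQ : 0 < Real.Gamma (Q:ℝ) := Real.Gamma_pos_of_pos hQR
  -- Gamma values
  have g32 : Real.Gamma (1 + (1:ℝ) / 2) = Real.sqrt Real.pi / 2 := by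
    have : Real.Gamma ((1:ℝ)/2 + 1) = (1/2) * Real.Gamma (1/2) :=
      Real.Gamma_add_one (by norm_num)
    rw [Real.Gamma_one_half_eq] at this
    rw [show (1:ℝ) + 1/2 = 1/2 + 1 by ring, this]; ring
  have g2 : Real.Gamma (1 + (2:ℝ) / 2) = 1 := by
    norm_num [Real.Gamma_two]
  have g52 : Real.Gamma (1 + (3:ℝ) / 2) = 3 * Real.sqrt Real.pi / 4 := by
    have h1 : Real.Gamma ((3:ℝ)/2 + 1) = (3/2) * Real.Gamma (3/2) :=
      Real.Gamma_add_one (by norm_num)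
    have h2 : Real.Gamma ((1:ℝ)/2 + 1) = (1/2) * Real.Gamma (1/2) :=
      Real.Gamma_add_one (by norm_num)
    rw [Real.Gamma_one_half_eq] at h2
    rw [show (1:ℝ) + 3/2 = 3/2 + 1 by ring, h1, show (3:ℝ)/2 = 1/2 + 1 by ring, h2]
    ring
  have g3 : Real.Gamma (1 + (4:ℝ) / 2) = 2 := by
    have : Real.Gamma ((2:ℝ) + 1) = 2 * Real.Gamma 2 := Real.Gamma_add_one (by norm_num)
    rw [show (1:ℝ) + 4/2 = 2 + 1 by ring, this, Real.Gamma_two, mul_one]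
  have gQ1 : Real.Gamma ((Q:ℝ) + (2:ℝ)/2) = (Q:ℝ) * Real.Gamma (Q:ℝ) := by
    rw [show (Q:ℝ) + (2:ℝ)/2 = (Q:ℝ) + 1 by ring]
    exact Real.Gamma_add_one hQR.ne'
  have gQ2 : Real.Gamma ((Q:ℝ) + (4:ℝ)/2) = ((Q:ℝ)+1) * ((Q:ℝ) * Real.Gamma (Q:ℝ)) := by
    rw [show (Q:ℝ) + (4:ℝ)/2 = ((Q:ℝ) + 1) + 1 by ring,
      Real.Gamma_add_one (by positivity), Real.Gamma_add_one hQR.ne']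
  push_cast
  rw [gQ1, gQ2, g32, g2, g52, g3]
  have hsq : Real.sqrt (Q:ℝ) ^ 2 = (Q:ℝ) := Real.sq_sqrt hQR.le
  have hsm : Real.sqrt ((Q:ℝ) * Real.pi) = Real.sqrt (Q:ℝ) * Real.sqrt Real.pi :=
    Real.sqrt_mul hQR.le _
  have hs3 : Real.sqrt (Q:ℝ) ^ 3 = (Q:ℝ) * Real.sqrt (Q:ℝ) := by
    rw [pow_succ, hsq]
  have hs4 : Real.sqrt (Q:ℝ) ^ 4 = (Q:ℝ) ^ 2 := by
    rw [show (4:ℕ) = 2 * 2 by norm_num, pow_mul, hsq]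
  rw [hsm]
  field_simp
  linear_combination (12 * σf ^ 2 * σg ^ 2 * σh ^ 2 * (Q:ℝ) * Real.Gamma (Q:ℝ)
    + 4 * σf ^ 3 * σg ^ 3 * σh * Real.sqrt (Q:ℝ) * Real.sqrt Real.pi
      * Real.Gamma ((2 * (Q:ℝ) + 3) / 2)
    + 2 * σf ^ 4 * σg ^ 4 * (Q:ℝ) * Real.Gamma (Q:ℝ) * ((Q:ℝ) + 1)
      * (Real.sqrt (Q:ℝ) ^ 2 + (Q:ℝ))) * hsq
end

section
/- Let σ > 0 and μ ≥ 0. On (μ², ∞) define F(α) = 1 − exp( −(√α − μ)²/σ² ) and f(α) = F′(α) = (√α − μ)/(σ² √α) · exp( −(√α − μ)²/σ² ). Then lim_{α → +∞} [ (1 − F(α)) / f(α)² ] · f′(α) = −1. -/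
open Real Filter

/-- The cdf of the overall channel power under channel hardening is a von Mises
function: with `F(α) = 1 − exp(−(√α − μ)²/σ²)` on `(μ², ∞)`, its derivative is
`f(α) = (√α − μ)/(σ²√α) exp(−(√α − μ)²/σ²)`, and
`(1 − F(α))/f(α)² · f′(α) → −1` as `α → ∞`. -/
theorem stmt_18 (σ μ : ℝ) (hσ : 0 < σ) (hμ : 0 ≤ μ)
    (F f : ℝ → ℝ)
    (hF : ∀ α : ℝ, μ ^ 2 < α →
      F α = 1 - Real.exp (-((Real.sqrt α - μ) ^ 2) / σ ^ 2))
    (hf : ∀ α : ℝ, μ ^ 2 < α →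
      f α = (Real.sqrt α - μ) / (σ ^ 2 * Real.sqrt α) *
        Real.exp (-((Real.sqrt α - μ) ^ 2) / σ ^ 2)) :
    (∀ α : ℝ, μ ^ 2 < α → HasDerivAt F (f α) α) ∧
    Filter.Tendsto (fun α : ℝ => (1 - F α) / f α ^ 2 * deriv f α)
      Filter.atTop (nhds (-1)) := by
  have hσ0 : σ ≠ 0 := ne_of_gt hσ
  have basic : ∀ α : ℝ, μ ^ 2 < α → 0 < α ∧ 0 < Real.sqrt α ∧ μ < Real.sqrt α := by
    intro α hα
    have h0 : 0 < α := lt_of_le_of_lt (sq_nonneg μ) hα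
    refine ⟨h0, Real.sqrt_pos.mpr h0, ?_⟩
    calc μ = Real.sqrt (μ ^ 2) := (Real.sqrt_sq hμ).symm
    _ < Real.sqrt α := Real.sqrt_lt_sqrt (sq_nonneg μ) hα
  have hmain : ∀ α : ℝ, μ ^ 2 < α → HasDerivAt F (f α) α := by
    intro α hα
    obtain ⟨h0, hs, hsμ⟩ := basic α hα
    have hsne : Real.sqrt α ≠ 0 := ne_of_gt hs
    have hsq : HasDerivAt Real.sqrt (1 / (2 * Real.sqrt α)) α :=
      Real.hasDerivAt_sqrt (ne_of_gt h0)
    have h1 : HasDerivAt (fun x : ℝ => Real.sqrt x - μ) (1 / (2 * Real.sqrt α)) α :=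
      hsq.sub_const μ
    have h2 := ((h1.pow 2).neg.div_const (σ ^ 2)).exp.const_sub 1
    have h3 : HasDerivAt (fun x : ℝ => 1 - Real.exp (-((Real.sqrt x - μ) ^ 2) / σ ^ 2))
        (f α) α := by
      refine h2.congr_deriv ?_
      rw [hf α hα]
      simp only [Pi.neg_apply, Pi.pow_apply]
      field_simp
      ring
    have heq : F =ᶠ[nhds α] fun x : ℝ => 1 - Real.exp (-((Real.sqrt x - μ) ^ 2) / σ ^ 2) := by
      filter_upwards [Ioi_mem_nhds hα] with x hx
      exact hF x hx
    exact heq.hasDerivAt_iff.mpr h3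
  refine ⟨hmain, ?_⟩
  have hderiv : ∀ α : ℝ, μ ^ 2 < α → deriv f α =
      (μ / (2 * σ ^ 2 * Real.sqrt α ^ 3) -
        ((Real.sqrt α - μ) / (σ ^ 2 * Real.sqrt α)) ^ 2) *
        Real.exp (-((Real.sqrt α - μ) ^ 2) / σ ^ 2) := by
    intro α hα
    obtain ⟨h0, hs, hsμ⟩ := basic α hα
    have hsne : Real.sqrt α ≠ 0 := ne_of_gt hs
    have hsq : HasDerivAt Real.sqrt (1 / (2 * Real.sqrt α)) α :=
      Real.hasDerivAt_sqrt (ne_of_gt h0)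
    have h1 : HasDerivAt (fun x : ℝ => Real.sqrt x - μ) (1 / (2 * Real.sqrt α)) α :=
      hsq.sub_const μ
    have hden : HasDerivAt (fun x : ℝ => σ ^ 2 * Real.sqrt x)
        (σ ^ 2 * (1 / (2 * Real.sqrt α))) α := hsq.const_mul (σ ^ 2)
    have hdne : σ ^ 2 * Real.sqrt α ≠ 0 := by positivity
    have hq := h1.div hden hdne
    have he := ((h1.pow 2).neg.div_const (σ ^ 2)).exp
    have hmul := hq.mul he
    have heq : f =ᶠ[nhds α] fun x : ℝ => (Real.sqrt x - μ) / (σ ^ 2 * Real.sqrt x) *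
        Real.exp (-((Real.sqrt x - μ) ^ 2) / σ ^ 2) := by
      filter_upwards [Ioi_mem_nhds hα] with x hx
      exact hf x hx
    have hf' := heq.hasDerivAt_iff.mpr hmul
    rw [hf'.deriv]
    simp only [Pi.neg_apply, Pi.pow_apply, Pi.div_apply]
    field_simp
    ring
  have hev : ∀ᶠ α in atTop, (1 - F α) / f α ^ 2 * deriv f α =
      μ * σ ^ 2 / (2 * Real.sqrt α * (Real.sqrt α - μ) ^ 2) - 1 := by
    filter_upwards [eventually_gt_atTop (μ ^ 2)] with α hα
    obtain ⟨h0, hs, hsμ⟩ := basic α hα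
    have hsne : Real.sqrt α ≠ 0 := ne_of_gt hs
    have hsμne : Real.sqrt α - μ ≠ 0 := sub_ne_zero.mpr (ne_of_gt hsμ)
    have hexp : Real.exp (-((Real.sqrt α - μ) ^ 2) / σ ^ 2) ≠ 0 := Real.exp_ne_zero _
    rw [hF α hα, hf α hα, hderiv α hα]
    field_simp
    ring
  have hsqrt : Tendsto Real.sqrt atTop atTop := by
    refine tendsto_atTop_atTop.mpr fun b => ⟨(max b 0) ^ 2, fun a ha => ?_⟩
    calc b ≤ max b 0 := le_max_left _ _
    _ = Real.sqrt ((max b 0) ^ 2) := (Real.sqrt_sq (le_max_right _ _)).symm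
    _ ≤ Real.sqrt a := Real.sqrt_le_sqrt ha
  have h2 : Tendsto (fun α : ℝ => Real.sqrt α - μ) atTop atTop := by
    simpa [sub_eq_add_neg] using tendsto_atTop_add_const_right atTop (-μ) hsqrt
  have hden : Tendsto (fun α : ℝ => 2 * Real.sqrt α * (Real.sqrt α - μ) ^ 2) atTop atTop := by
    have h3 : Tendsto (fun α : ℝ => (Real.sqrt α - μ) ^ 2) atTop atTop := by
      simpa [pow_two] using h2.atTop_mul_atTop₀ h2
    have h4 : Tendsto (fun α : ℝ => 2 * Real.sqrt α) atTop atTop :=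
      hsqrt.const_mul_atTop (by norm_num)
    exact h4.atTop_mul_atTop₀ h3
  have hlim : Tendsto (fun α : ℝ => μ * σ ^ 2 / (2 * Real.sqrt α * (Real.sqrt α - μ) ^ 2) - 1)
      atTop (nhds (-1)) := by
    have h5 : Tendsto (fun α : ℝ => μ * σ ^ 2 / (2 * Real.sqrt α * (Real.sqrt α - μ) ^ 2))
        atTop (nhds 0) := Tendsto.div_atTop tendsto_const_nhds hden
    simpa using h5.sub_const 1
  exact Filter.Tendsto.congr' (Filter.EventuallyEq.symm hev) hlim
end
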